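/- arXiv:2001.00785 — 2 statements merged into one kernel-verified Lean document; each statement's English description precedes it below -/
import Mathlib

section
/- The polynomial x³ − 14x² + 28x − 49 is irreducible over ℚ and its discriminant equals −191051, which is not a square of a rational number; consequently its Galois group over ℚ is the symmetric group S₃ (in particular, nonabelian), so its roots do not lie in any cyclotomic field. -/
/-!
Reducing modulo 3 leaves a cubic without roots in `𝔽₃`, so the polynomial is irreducible over `ℚ`.
It has exactly one real root, so complex conjugation acts on the three complex roots as a
transposition; together with the 3-cycle coming from irreducibility, the Galois group is all of
`S₃`. A root lying in a cyclotomic field would make the splitting field a subfield of an abelian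
extension, forcing the Galois group to be abelian, which `S₃` is not.
-/

open Polynomial

theorem MulEquiv.isMulCommutative {G H : Type*} [Mul G] [Mul H] (e : G ≃* H)
    [IsMulCommutative G] : IsMulCommutative H :=
  .of_comm fun a b ↦ e.symm.injective (by simp only [map_mul, mul_comm'])

theorem Polynomial.Monic.irreducible_map_rat_of_irreducible_map_zmod {f : ℤ[X]} (hf : f.Monic)
    (q : ℕ) [Fact q.Prime] (h : Irreducible (f.map (Int.castRingHom (ZMod q)))) :
    Irreducible (f.map (Int.castRingHom ℚ)) :=
  hf.irreducible_iff_irreducible_map_fraction_map.mp (hf.irreducible_of_irreducible_map _ _ h)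

theorem Polynomial.Gal.nonempty_mulEquiv_perm_of_prime_degree {p : ℚ[X]} {n : ℕ}
    (hp : Irreducible p) (hdeg : p.natDegree = n) (hn : n.Prime)
    (hreal1 : Fintype.card (p.rootSet ℝ) + 1 ≤ n) (hreal2 : n ≤ Fintype.card (p.rootSet ℝ) + 3) :
    Nonempty (p.Gal ≃* Equiv.Perm (Fin n)) := by
  have := Gal.splits_ℚ_ℂ (p := p)
  have hC : Fintype.card (p.rootSet ℂ) = n :=
    hdeg ▸ card_rootSet_eq_natDegree hp.separable (IsAlgClosed.splits _)
  have hbij := galActionHom_bijective_of_prime_degree' hp (hdeg ▸ hn) (hC ▸ hreal1) (hC ▸ hreal2)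
  exact ⟨(MulEquiv.ofBijective _ hbij).trans (Equiv.permCongrHom (Fintype.equivFinOfCardEq hC))⟩

theorem Polynomial.Gal.isMulCommutative_of_aeval_eq_zero {F L : Type*} [Field F] [Field L]
    [Algebra F L] {p : F[X]} (hp : Irreducible p) {K : IntermediateField F L}
    [IsAbelianGalois F K] {x : L} (hxK : x ∈ K) (hx : aeval x p = 0) :
    IsMulCommutative p.Gal := by
  set y : K := ⟨x, hxK⟩
  have hmin : p * C p.leadingCoeff⁻¹ = minpoly F y := by
    rw [IntermediateField.minpoly_eq]
    exact minpoly.eq_of_irreducible hp hx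
  have hsplits : (p.map (algebraMap F K)).Splits :=
    (Normal.splits inferInstance y).of_dvd
      (map_ne_zero (minpoly.ne_zero (Algebra.IsIntegral.isIntegral y)))
      (map_dvd _ (hmin ▸ dvd_mul_right p _))
  have := IsAbelianGalois.of_algHom (IsSplittingField.lift p.SplittingField p hsplits)
  exact this.toIsMulCommutative

theorem isAbelianGalois_adjoin_rootsOfUnity {F L : Type*} [Field F] [Field L] [Algebra F L]
    {n : ℕ} [NeZero n] {ζ : L} (hζ : IsPrimitiveRoot ζ n) :
    IsAbelianGalois F (IntermediateField.adjoin F {z : L | z ^ n = 1}) := by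
  have := IntermediateField.isCyclotomicExtension_adjoin_of_exists_isPrimitiveRoot {n} F L
    fun m hm _ ↦ ⟨ζ, Set.mem_singleton_iff.mp hm ▸ hζ⟩
  have hS : {b : L | ∃ m ∈ ({n} : Set ℕ), m ≠ 0 ∧ b ^ m = 1} = {z : L | z ^ n = 1} := by
    simp [NeZero.ne]
  rw [hS] at this
  exact IsCyclotomicExtension.isAbelianGalois {n} F _

theorem irreducible_cubic_zmod_three :
    Irreducible (X ^ 3 - 14 * X ^ 2 + 28 * X - 49 : (ZMod 3)[X]) := by
  refine irreducible_of_degree_le_three_of_not_isRoot ?_ ?_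
  · rw [show (X ^ 3 - 14 * X ^ 2 + 28 * X - 49 : (ZMod 3)[X]).natDegree = 3 by compute_degree!]
    decide
  · simp only [IsRoot, eval_sub, eval_add, eval_mul, eval_pow, eval_X, eval_ofNat]
    decide

theorem irreducible_cubic : Irreducible (X ^ 3 - 14 * X ^ 2 + 28 * X - 49 : ℚ[X]) := by
  have hmonic : (X ^ 3 - 14 * X ^ 2 + 28 * X - 49 : ℤ[X]).Monic := by monicity!
  simpa using hmonic.irreducible_map_rat_of_irreducible_map_zmod 3
    (by simpa using irreducible_cubic_zmod_three)

theorem natDegree_cubic : (X ^ 3 - 14 * X ^ 2 + 28 * X - 49 : ℚ[X]).natDegree = 3 := by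
  compute_degree!

-- Both roots exceed 12, where the difference quotient of the cubic is positive.
theorem eq_of_cubic_eq_zero {a b : ℝ} (ha : a ^ 3 - 14 * a ^ 2 + 28 * a - 49 = 0)
    (hb : b ^ 3 - 14 * b ^ 2 + 28 * b - 49 = 0) : a = b := by
  have ha12 : 12 < a := by nlinarith [sq_nonneg (a - 1)]
  have hb12 : 12 < b := by nlinarith [sq_nonneg (b - 1)]
  have hpos : 0 < a ^ 2 + a * b + b ^ 2 - 14 * (a + b) + 28 := by nlinarith
  have hfactor : (a - b) * (a ^ 2 + a * b + b ^ 2 - 14 * (a + b) + 28) = 0 := by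
    linear_combination ha - hb
  exact sub_eq_zero.mp ((mul_eq_zero.mp hfactor).resolve_right hpos.ne')

theorem card_rootSet_real_cubic_le_one :
    Fintype.card ((X ^ 3 - 14 * X ^ 2 + 28 * X - 49 : ℚ[X]).rootSet ℝ) ≤ 1 := by
  refine Fintype.card_le_one_iff.mpr fun a b ↦ Subtype.ext (eq_of_cubic_eq_zero ?_ ?_)
  · simpa [map_ofNat] using (mem_rootSet.mp a.2).2
  · simpa [map_ofNat] using (mem_rootSet.mp b.2).2

theorem stmt_2 :
    Irreducible (X ^ 3 - 14 * X ^ 2 + 28 * X - 49 : ℚ[X]) ∧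
    (18 * (-14) * 28 * (-49) - 4 * (-14) ^ 3 * (-49) + (-14) ^ 2 * 28 ^ 2
        - 4 * 28 ^ 3 - 27 * (-49) ^ 2 : ℚ) = -191051 ∧
    ¬ IsSquare (-191051 : ℚ) ∧
    Nonempty ((X ^ 3 - 14 * X ^ 2 + 28 * X - 49 : ℚ[X]).Gal ≃* Equiv.Perm (Fin 3)) ∧
    ∀ (n : ℕ) (x : ℂ), 0 < n →
      aeval x (X ^ 3 - 14 * X ^ 2 + 28 * X - 49 : ℚ[X]) = 0 →
      x ∉ Algebra.adjoin ℚ {z : ℂ | z ^ n = 1} := by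
  have hreal := card_rootSet_real_cubic_le_one
  obtain ⟨e⟩ := Gal.nonempty_mulEquiv_perm_of_prime_degree irreducible_cubic natDegree_cubic
    Nat.prime_three (by omega) (by omega)
  refine ⟨irreducible_cubic, by norm_num, fun hsq ↦ by linarith [hsq.nonneg], ⟨e⟩, ?_⟩
  intro n x hn hx hmem
  have : NeZero n := ⟨hn.ne'⟩
  have := isAbelianGalois_adjoin_rootsOfUnity (F := ℚ) (Complex.isPrimitiveRoot_exp n hn.ne')
  have := Gal.isMulCommutative_of_aeval_eq_zero irreducible_cubic
    (IntermediateField.algebra_adjoin_le_adjoin ℚ _ hmem) hx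
  exact absurd (Equiv.Perm.isMulCommutative_iff_card_le_two.mp e.isMulCommutative) (by simp)
end

section
/- The polynomial x³ − 54x² + 405x − 729 is irreducible over ℚ and its discriminant equals 26040609 = 5103²; consequently its Galois group over ℚ is cyclic of order 3. -/
/-!
Reducing mod 2 gives `X³ + X + 1`, which has no root in `𝔽₂`, so the cubic is irreducible over `ℤ`
and, by Gauss's lemma, over `ℚ`. If `r` is a root, the other two roots are `-r²/3 + 16r - 36` and
`r²/3 - 17r + 90`, so the cubic splits in its own root field. That field is therefore its
splitting field, of degree `3`, and a group of prime order is cyclic.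
-/

open Polynomial

theorem X_sub_C_mul_X_sub_C_mul_X_sub_C {R : Type*} [CommRing R] {a b c s t u : R}
    (hs : a + b + c = s) (ht : a * b + b * c + c * a = t) (hu : a * b * c = u) :
    (X - C a) * (X - C b) * (X - C c) = X ^ 3 - C s * X ^ 2 + C t * X - C u := by
  subst hs ht hu
  simp only [map_add, map_mul]
  ring

namespace AdjoinRoot

variable {K : Type*} [Field K] {f : K[X]}

theorem isSplittingField_of_splits [Fact (Irreducible f)]
    (h : (f.map (algebraMap K (AdjoinRoot f))).Splits) : IsSplittingField K (AdjoinRoot f) f := by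
  refine ⟨h, eq_top_iff.mpr ?_⟩
  rw [← adjoinRoot_eq_top]
  refine Algebra.adjoin_mono (Set.singleton_subset_iff.mpr ?_)
  rw [mem_rootSet_of_ne (Fact.out : Irreducible f).ne_zero, aeval_eq, mk_self]

theorem card_gal_of_splits (hf : Irreducible f) (hsep : f.Separable)
    (h : (f.map (algebraMap K (AdjoinRoot f))).Splits) : Nat.card f.Gal = f.natDegree := by
  have := Fact.mk hf
  have := isSplittingField_of_splits h
  rw [Gal.card_of_separable hsep,
    ← (IsSplittingField.algEquiv (AdjoinRoot f) f).toLinearEquiv.finrank_eq,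
    (powerBasis hf.ne_zero).finrank, powerBasis_dim]

end AdjoinRoot

theorem irreducible_X_pow_three_add_X_add_one : Irreducible (X ^ 3 + X + 1 : (ZMod 2)[X]) := by
  refine irreducible_of_degree_le_three_of_not_isRoot ?_ fun x => ?_
  · rw [show (X ^ 3 + X + 1 : (ZMod 2)[X]).natDegree = 3 by compute_degree!]
    decide
  · simp only [IsRoot, eval_add, eval_pow, eval_X, eval_one]
    fin_cases x <;> decide

theorem irreducible_cubic_int : Irreducible (X ^ 3 - 54 * X ^ 2 + 405 * X - 729 : ℤ[X]) := by
  refine Monic.irreducible_of_irreducible_map (Int.castRingHom (ZMod 2)) _ (by monicity!) ?_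
  have hmod2 : (X ^ 3 - 54 * X ^ 2 + 405 * X - 729 : ℤ[X]).map (Int.castRingHom (ZMod 2)) =
      X ^ 3 + X + 1 := by
    simp only [Polynomial.map_sub, Polynomial.map_add, Polynomial.map_mul, Polynomial.map_pow,
      Polynomial.map_X, Polynomial.map_ofNat]
    reduce_mod_char
  rw [hmod2]
  exact irreducible_X_pow_three_add_X_add_one

theorem irreducible_cubic_rat : Irreducible (X ^ 3 - 54 * X ^ 2 + 405 * X - 729 : ℚ[X]) := by
  have := ((show (X ^ 3 - 54 * X ^ 2 + 405 * X - 729 : ℤ[X]).Monic by monicity!)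
    |>.irreducible_iff_irreducible_map_fraction_map (K := ℚ)).mp irreducible_cubic_int
  simpa only [Polynomial.map_sub, Polynomial.map_add, Polynomial.map_mul, Polynomial.map_pow,
    Polynomial.map_X, Polynomial.map_ofNat] using this

theorem cubic_eq_prod_X_sub_C {K : Type*} [Field K] [CharZero K] {r : K}
    (hr : r ^ 3 - 54 * r ^ 2 + 405 * r - 729 = 0) :
    (X ^ 3 - 54 * X ^ 2 + 405 * X - 729 : K[X]) =
      (X - C r) * (X - C (-r ^ 2 / 3 + 16 * r - 36)) * (X - C (r ^ 2 / 3 - 17 * r + 90)) := by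
  rw [X_sub_C_mul_X_sub_C_mul_X_sub_C (s := 54) (t := 405) (u := 729) (by ring)
    (by linear_combination (5 - r / 9) * hr) (by linear_combination (1 + 5 * r - r ^ 2 / 9) * hr)]
  simp only [map_ofNat]

theorem cubic_splits_adjoinRoot :
    ((X ^ 3 - 54 * X ^ 2 + 405 * X - 729 : ℚ[X]).map
      (algebraMap ℚ (AdjoinRoot (X ^ 3 - 54 * X ^ 2 + 405 * X - 729 : ℚ[X])))).Splits := by
  have := Fact.mk irreducible_cubic_rat
  have hr := AdjoinRoot.eval₂_root (X ^ 3 - 54 * X ^ 2 + 405 * X - 729 : ℚ[X])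
  simp only [eval₂_sub, eval₂_add, eval₂_mul, eval₂_pow, eval₂_X, eval₂_ofNat] at hr
  simp only [Polynomial.map_sub, Polynomial.map_add, Polynomial.map_mul, Polynomial.map_pow,
    Polynomial.map_X, Polynomial.map_ofNat]
  rw [cubic_eq_prod_X_sub_C hr]
  exact ((Splits.X_sub_C _).mul (Splits.X_sub_C _)).mul (Splits.X_sub_C _)

theorem stmt_3 :
    Irreducible (X ^ 3 - 54 * X ^ 2 + 405 * X - 729 : ℚ[X]) ∧
    (18 * (-54) * 405 * (-729) - 4 * (-54) ^ 3 * (-729) + (-54) ^ 2 * 405 ^ 2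
        - 4 * 405 ^ 3 - 27 * (-729) ^ 2 : ℚ) = 26040609 ∧
    (26040609 : ℚ) = 5103 ^ 2 ∧
    IsCyclic (X ^ 3 - 54 * X ^ 2 + 405 * X - 729 : ℚ[X]).Gal ∧
    Nat.card (X ^ 3 - 54 * X ^ 2 + 405 * X - 729 : ℚ[X]).Gal = 3 := by
  have hcard : Nat.card (X ^ 3 - 54 * X ^ 2 + 405 * X - 729 : ℚ[X]).Gal = 3 := by
    rw [AdjoinRoot.card_gal_of_splits irreducible_cubic_rat irreducible_cubic_rat.separable
      cubic_splits_adjoinRoot]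
    compute_degree!
  have : Fact (Nat.Prime 3) := ⟨Nat.prime_three⟩
  exact ⟨irreducible_cubic_rat, by norm_num, by norm_num, isCyclic_of_prime_card hcard, hcard⟩
end
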